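/- Let A be a real N×d matrix with AᵀA positive definite, with largest eigenvalue λ₁ and smallest eigenvalue λ_d > 0; let K* = (AᵀA)⁻¹, b ∈ ℝ^N, and x* the minimizer of x ↦ ½‖Ax−b‖². Let 0 < δ ≤ 1, ρ ∈ [0,1), w_b ∈ ℝ^N, and suppose {x(t)}, {K(t)} satisfy x(t+1) = x(t) − δK(t+1)Aᵀ(Ax(t) − b − w_b) and ‖K(t) − K*‖ ≤ ρᵗ ‖K(0) − K*‖_F for all t (spectral and Frobenius norms respectively). Then, with z(t) = x(t) − x*, for all t ≥ 0: ‖z(t+1)‖ ≤ (1 − δ + δλ₁‖K(0) − K*‖_F ρ^{t+1}) ‖z(t)‖ + δ√λ₁ ‖K(0) − K*‖_F ρ^{t+1} ‖w_b‖ + δ (1/√λ_d) ‖w_b‖. -/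

import Mathlib

open Matrix Filter Finset MeasureTheory ProbabilityTheory

/-- The spectral norm (operator 2-norm) of a real rectangular matrix, i.e. the operator
norm of the induced linear map between Euclidean spaces. -/
noncomputable def specNorm {m n : ℕ} (M : Matrix (Fin m) (Fin n) ℝ) : ℝ :=
  ‖LinearMap.toContinuousLinearMap (Matrix.toEuclideanLin M)‖

/-- Matrix-vector multiplication, viewed as a map between Euclidean spaces. -/
noncomputable def mulVecE {m n : ℕ} (M : Matrix (Fin m) (Fin n) ℝ)
    (v : EuclideanSpace ℝ (Fin n)) : EuclideanSpace ℝ (Fin m) :=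
  Matrix.toEuclideanLin M v

/-- The `j`-th column of a matrix, as an element of Euclidean space. -/
noncomputable def colE {m n : ℕ} (M : Matrix (Fin m) (Fin n) ℝ) (j : Fin n) :
    EuclideanSpace ℝ (Fin m) := WithLp.toLp 2 (fun i => M i j)

/-- The Frobenius norm of a matrix: square root of the sum of the squared Euclidean
norms of its columns. -/
noncomputable def frobNorm {m n : ℕ} (M : Matrix (Fin m) (Fin n) ℝ) : ℝ :=
  Real.sqrt (∑ j, ‖colE M j‖ ^ 2)

/-- The l¹-norm of a vector. -/
noncomputable def l1Norm {n : ℕ} (v : EuclideanSpace ℝ (Fin n)) : ℝ := ∑ i, |v i|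


/-!
Because `x*` is a least-squares minimizer it satisfies the normal equations `Aᵀ(Ax* - b) = 0`,
so the error `z = x - x*` obeys `z(t+1) = z - δ K(t+1) (AᵀA z - Aᵀ w_b)`. Writing
`K(t+1) = K* + K̃` with `K* AᵀA = 1` turns this into
`z(t+1) = (1 - δ) z - δ K̃ (AᵀA z - Aᵀ w_b) + δ K* Aᵀ w_b`, and the triangle inequality leaves
three operator norms to control. In the L2 operator norm, `‖AᵀA‖ ≤ λ₁` and `‖K*‖ ≤ 1/λ_d` are read
off the spectrum through the isometric continuous functional calculus, while the C⋆-identity gives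
`‖Aᵀ‖² = ‖AᵀA‖` and `‖K* Aᵀ‖² = ‖K* AᵀA K*‖ = ‖K*‖`.
-/

open scoped Matrix.Norms.L2Operator

theorem LinearMap.adjoint_apply_sub_eq_zero_of_forall_norm_le {E F : Type*}
    [NormedAddCommGroup E] [InnerProductSpace ℝ E] [FiniteDimensional ℝ E]
    [NormedAddCommGroup F] [InnerProductSpace ℝ F] [FiniteDimensional ℝ F]
    (f : E →ₗ[ℝ] F) {b : F} {x₀ : E} (h : ∀ y, ‖f x₀ - b‖ ≤ ‖f y - b‖) :
    f.adjoint (f x₀ - b) = 0 := by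
  have hinf : ‖b - f x₀‖ = ⨅ w : (LinearMap.range f : Set F), ‖b - w‖ := by
    refine le_antisymm (le_ciInf ?_)
      (ciInf_le ⟨0, ?_⟩ (⟨f x₀, x₀, rfl⟩ : (LinearMap.range f : Set F)))
    · rintro ⟨_, y, rfl⟩
      simpa only [norm_sub_rev b] using h y
    · rintro _ ⟨w, rfl⟩
      exact norm_nonneg _
  have horth := ((LinearMap.range f).norm_eq_iInf_iff_real_inner_eq_zero ⟨x₀, rfl⟩).1 hinf
  refine ext_inner_left ℝ fun v => ?_
  rw [LinearMap.adjoint_inner_right, inner_zero_right, ← neg_sub, inner_neg_right,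
    real_inner_comm, horth _ ⟨v, rfl⟩, neg_zero]

namespace Matrix

section L2OpNorm

variable {m n : Type*} [Fintype m] [Fintype n] [DecidableEq n]

theorem IsHermitian.l2_opNorm_le {S : Matrix n n ℝ} (hS : S.IsHermitian) {c : ℝ} (hc : 0 ≤ c)
    (h : ∀ i, |hS.eigenvalues i| ≤ c) : ‖S‖ ≤ c := by
  have hsa : IsSelfAdjoint S := hS.isSelfAdjoint
  have hcfc := norm_cfc_le (𝕜 := ℝ) (a := S) (f := id) hc (by
    rintro x hx
    rw [hS.spectrum_real_eq_range_eigenvalues] at hx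
    obtain ⟨i, rfl⟩ := hx
    exact h i)
  convert hcfc using 2
  exact (cfc_id ℝ S).symm

theorem IsHermitian.l2_opNorm_inv_le {S : Matrix n n ℝ} (hS : S.IsHermitian) {c : ℝ} (hc : 0 < c)
    (h : ∀ i, c ≤ hS.eigenvalues i) : ‖S⁻¹‖ ≤ c⁻¹ := by
  have hsa : IsSelfAdjoint S := hS.isSelfAdjoint
  have hσ := hS.spectrum_real_eq_range_eigenvalues
  have hunit : IsUnit S := by
    refine spectrum.zero_notMem_iff ℝ |>.1 fun h0 => ?_
    rw [hσ] at h0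
    obtain ⟨i, hi⟩ := h0
    exact (hc.trans_le ((h i).trans hi.le)).ne rfl
  have hcfc := norm_cfc_le (𝕜 := ℝ) (a := S) (f := fun x => x⁻¹) (inv_nonneg.2 hc.le) (by
    rintro x hx
    rw [hσ] at hx
    obtain ⟨i, rfl⟩ := hx
    rw [norm_inv, Real.norm_of_nonneg (hc.le.trans (h i))]
    exact inv_anti₀ hc (h i))
  convert hcfc using 2
  exact (nonsing_inv_eq_ringInverse S).trans (cfc_ringInverse_id (R := ℝ) S hunit).symm

theorem l2_opNorm_transpose [DecidableEq m] (A : Matrix m n ℝ) : ‖Aᵀ‖ = ‖A‖ := by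
  rw [← conjTranspose_eq_transpose_of_trivial, l2_opNorm_conjTranspose]

theorem l2_opNorm_transpose_mul_self (A : Matrix m n ℝ) : ‖Aᵀ * A‖ = ‖A‖ * ‖A‖ := by
  rw [← conjTranspose_eq_transpose_of_trivial, l2_opNorm_conjTranspose_mul_self]

theorem nonsing_inv_mul_mul_nonsing_inv (S : Matrix n n ℝ) : S⁻¹ * S * S⁻¹ = S⁻¹ := by
  by_cases h : IsUnit S.det
  · rw [nonsing_inv_mul _ h, one_mul]
  · rw [nonsing_inv_apply_not_isUnit _ h, zero_mul, zero_mul]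

theorem l2_opNorm_inv_transpose_mul_self_mul_transpose [DecidableEq m] (A : Matrix m n ℝ) :
    ‖(Aᵀ * A)⁻¹ * Aᵀ‖ * ‖(Aᵀ * A)⁻¹ * Aᵀ‖ = ‖(Aᵀ * A)⁻¹‖ := by
  have hsymm : ((Aᵀ * A)⁻¹)ᵀ = (Aᵀ * A)⁻¹ := by
    rw [transpose_nonsing_inv, transpose_mul, transpose_transpose]
  rw [← l2_opNorm_transpose, ← l2_opNorm_transpose_mul_self, transpose_transpose,
    transpose_mul, transpose_transpose, hsymm]
  simpa only [Matrix.mul_assoc] using congrArg norm (nonsing_inv_mul_mul_nonsing_inv (Aᵀ * A))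

end L2OpNorm

end Matrix

section MulVecE

variable {m n k : ℕ}

theorem specNorm_eq_l2_opNorm (M : Matrix (Fin m) (Fin n) ℝ) : specNorm M = ‖M‖ := rfl

theorem norm_mulVecE_le (M : Matrix (Fin m) (Fin n) ℝ) (v : EuclideanSpace ℝ (Fin n)) :
    ‖mulVecE M v‖ ≤ ‖M‖ * ‖v‖ :=
  (LinearMap.toContinuousLinearMap (toEuclideanLin M)).le_opNorm v

theorem mulVecE_add (M : Matrix (Fin m) (Fin n) ℝ) (v w : EuclideanSpace ℝ (Fin n)) :
    mulVecE M (v + w) = mulVecE M v + mulVecE M w := map_add _ _ _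

theorem mulVecE_sub (M : Matrix (Fin m) (Fin n) ℝ) (v w : EuclideanSpace ℝ (Fin n)) :
    mulVecE M (v - w) = mulVecE M v - mulVecE M w := map_sub _ _ _

theorem sub_mulVecE (M M' : Matrix (Fin m) (Fin n) ℝ) (v : EuclideanSpace ℝ (Fin n)) :
    mulVecE (M - M') v = mulVecE M v - mulVecE M' v := by
  simp only [mulVecE, map_sub, LinearMap.sub_apply]

theorem mulVecE_mul (M : Matrix (Fin m) (Fin n) ℝ) (M' : Matrix (Fin n) (Fin k) ℝ)
    (v : EuclideanSpace ℝ (Fin k)) : mulVecE (M * M') v = mulVecE M (mulVecE M' v) := by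
  simp only [mulVecE, toLpLin_apply, mulVec_mulVec]

theorem mulVecE_one (v : EuclideanSpace ℝ (Fin n)) :
    mulVecE (1 : Matrix (Fin n) (Fin n) ℝ) v = v := by
  simp only [mulVecE, toLpLin_apply, one_mulVec, WithLp.toLp_ofLp]

theorem mulVecE_transpose_sub_eq_zero_of_forall_norm_le (A : Matrix (Fin m) (Fin n) ℝ)
    {b : EuclideanSpace ℝ (Fin m)} {x₀ : EuclideanSpace ℝ (Fin n)}
    (h : ∀ y, ‖mulVecE A x₀ - b‖ ≤ ‖mulVecE A y - b‖) : mulVecE Aᵀ (mulVecE A x₀ - b) = 0 := by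
  rw [mulVecE, ← conjTranspose_eq_transpose_of_trivial, toEuclideanLin_conjTranspose_eq_adjoint]
  exact (toEuclideanLin A).adjoint_apply_sub_eq_zero_of_forall_norm_le h

end MulVecE

section OneStep

variable {N d : ℕ}

theorem sub_smul_mulVecE_sub_eq_of_normal_eq (A : Matrix (Fin N) (Fin d) ℝ)
    (K : Matrix (Fin d) (Fin d) ℝ) (δ : ℝ) {b : EuclideanSpace ℝ (Fin N)}
    {xstar : EuclideanSpace ℝ (Fin d)} (hnormal : mulVecE Aᵀ (mulVecE A xstar - b) = 0)
    (x : EuclideanSpace ℝ (Fin d)) (w : EuclideanSpace ℝ (Fin N)) :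
    x - δ • mulVecE K (mulVecE Aᵀ (mulVecE A x - b - w)) - xstar =
      (x - xstar) - δ • mulVecE K (mulVecE (Aᵀ * A) (x - xstar) - mulVecE Aᵀ w) := by
  have hres : mulVecE A x - b - w = mulVecE A (x - xstar) + (mulVecE A xstar - b) - w := by
    rw [mulVecE_sub]; abel
  rw [hres, mulVecE_sub, mulVecE_add, hnormal, add_zero, mulVecE_mul]
  abel

theorem norm_sub_smul_mulVecE_sub_le (K Ks S : Matrix (Fin d) (Fin d) ℝ)
    (B : Matrix (Fin d) (Fin N) ℝ) (hKS : Ks * S = 1) {δ : ℝ} (hδ0 : 0 ≤ δ) (hδ1 : δ ≤ 1)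
    (z : EuclideanSpace ℝ (Fin d)) (w : EuclideanSpace ℝ (Fin N)) :
    ‖z - δ • mulVecE K (mulVecE S z - mulVecE B w)‖ ≤
      (1 - δ + δ * ‖S‖ * ‖K - Ks‖) * ‖z‖ + δ * ‖B‖ * ‖K - Ks‖ * ‖w‖ + δ * ‖Ks * B‖ * ‖w‖ := by
  set u := mulVecE S z - mulVecE B w
  have hsplit : z - δ • mulVecE K u =
      (1 - δ) • z - δ • mulVecE (K - Ks) u + δ • mulVecE (Ks * B) w := by
    have hKsu : mulVecE Ks u = z - mulVecE (Ks * B) w := by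
      rw [mulVecE_sub, ← mulVecE_mul, hKS, mulVecE_one, mulVecE_mul]
    rw [sub_mulVecE, hKsu]
    module
  have hu : ‖mulVecE (K - Ks) u‖ ≤ ‖K - Ks‖ * (‖S‖ * ‖z‖ + ‖B‖ * ‖w‖) :=
    (norm_mulVecE_le _ _).trans <| by
      gcongr
      exact (norm_sub_le _ _).trans (add_le_add (norm_mulVecE_le _ _) (norm_mulVecE_le _ _))
  calc ‖z - δ • mulVecE K u‖
      ≤ ‖(1 - δ) • z‖ + ‖δ • mulVecE (K - Ks) u‖ + ‖δ • mulVecE (Ks * B) w‖ := by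
        rw [hsplit]
        exact (norm_add_le _ _).trans (add_le_add_left (norm_sub_le _ _) _)
    _ ≤ (1 - δ) * ‖z‖ + δ * (‖K - Ks‖ * (‖S‖ * ‖z‖ + ‖B‖ * ‖w‖)) + δ * (‖Ks * B‖ * ‖w‖) := by
        rw [norm_smul, norm_smul, norm_smul, Real.norm_of_nonneg (sub_nonneg.2 hδ1),
          Real.norm_of_nonneg hδ0]
        gcongr
        exact norm_mulVecE_le _ _
    _ = _ := by ring

end OneStep

theorem ipg_observation_noise_one_step_bound_general {N d : ℕ}
    (A : Matrix (Fin N) (Fin d) ℝ) (hPD : (Aᵀ * A).PosDef)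
    (lam1 lamd : ℝ)
    (hlam1 : IsGreatest (Set.range hPD.isHermitian.eigenvalues) lam1)
    (hlamd : IsLeast (Set.range hPD.isHermitian.eigenvalues) lamd)
    (b : EuclideanSpace ℝ (Fin N)) (xstar : EuclideanSpace ℝ (Fin d))
    (hmin : ∀ y, (1 / 2) * ‖mulVecE A xstar - b‖ ^ 2 ≤ (1 / 2) * ‖mulVecE A y - b‖ ^ 2)
    (δ : ℝ) (hδ0 : 0 < δ) (hδ1 : δ ≤ 1)
    (ρ : ℝ)
    (wb : EuclideanSpace ℝ (Fin N))
    (x : ℕ → EuclideanSpace ℝ (Fin d)) (K : ℕ → Matrix (Fin d) (Fin d) ℝ)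
    (hrec : ∀ t, x (t + 1) =
      x t - δ • mulVecE (K (t + 1)) (mulVecE Aᵀ (mulVecE A (x t) - b - wb)))
    (hdecay : ∀ t, specNorm (K t - (Aᵀ * A)⁻¹) ≤ ρ ^ t * frobNorm (K 0 - (Aᵀ * A)⁻¹)) :
    ∀ t, ‖x (t + 1) - xstar‖ ≤
      (1 - δ + δ * lam1 * frobNorm (K 0 - (Aᵀ * A)⁻¹) * ρ ^ (t + 1)) * ‖x t - xstar‖
        + δ * Real.sqrt lam1 * frobNorm (K 0 - (Aᵀ * A)⁻¹) * ρ ^ (t + 1) * ‖wb‖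
        + δ * (1 / Real.sqrt lamd) * ‖wb‖ := by
  intro t
  set S := Aᵀ * A
  set F := frobNorm (K 0 - S⁻¹)
  have hlamd_pos : 0 < lamd := by
    obtain ⟨i, rfl⟩ := hlamd.1
    exact hPD.eigenvalues_pos i
  have hlam1_pos : 0 < lam1 := hlamd_pos.trans_le (hlamd.2 hlam1.1)
  have hS : ‖S‖ ≤ lam1 := hPD.isHermitian.l2_opNorm_le hlam1_pos.le fun i =>
    (abs_of_pos (hPD.eigenvalues_pos i)).trans_le (hlam1.2 ⟨i, rfl⟩)
  have hAt : ‖Aᵀ‖ ≤ √lam1 := by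
    rw [Real.le_sqrt (norm_nonneg _) hlam1_pos.le, sq, l2_opNorm_transpose,
      ← l2_opNorm_transpose_mul_self]
    exact hS
  have hKsAt : ‖S⁻¹ * Aᵀ‖ ≤ 1 / √lamd := by
    rw [one_div, ← Real.sqrt_inv, Real.le_sqrt (norm_nonneg _) (inv_nonneg.2 hlamd_pos.le), sq,
      l2_opNorm_inv_transpose_mul_self_mul_transpose]
    exact hPD.isHermitian.l2_opNorm_inv_le hlamd_pos fun i => hlamd.2 ⟨i, rfl⟩
  have hK : ‖K (t + 1) - S⁻¹‖ ≤ F * ρ ^ (t + 1) := by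
    rw [← specNorm_eq_l2_opNorm, mul_comm]
    exact hdecay (t + 1)
  have hnormal := mulVecE_transpose_sub_eq_zero_of_forall_norm_le A fun y =>
    (pow_le_pow_iff_left₀ (norm_nonneg _) (norm_nonneg _) two_ne_zero).1 (by linarith [hmin y])
  rw [hrec t, sub_smul_mulVecE_sub_eq_of_normal_eq A _ δ hnormal]
  have hKsS : S⁻¹ * S = 1 := nonsing_inv_mul S ((isUnit_iff_isUnit_det S).1 hPD.isUnit)
  refine (norm_sub_smul_mulVecE_sub_le _ _ S Aᵀ hKsS hδ0.le hδ1 _ _).trans ?_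
  calc _ ≤ (1 - δ + δ * lam1 * (F * ρ ^ (t + 1))) * ‖x t - xstar‖
        + δ * √lam1 * (F * ρ ^ (t + 1)) * ‖wb‖ + δ * (1 / √lamd) * ‖wb‖ := by gcongr
    _ = _ := by ring

/-- deterministic one-step bound in the proof of Theorem 1 of the paper. -/
theorem ipg_observation_noise_one_step_bound {N d : ℕ}
    (A : Matrix (Fin N) (Fin d) ℝ) (hPD : (Aᵀ * A).PosDef)
    (lam1 lamd : ℝ)
    (hlam1 : IsGreatest (Set.range hPD.isHermitian.eigenvalues) lam1)
    (hlamd : IsLeast (Set.range hPD.isHermitian.eigenvalues) lamd)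
    (hlamdpos : 0 < lamd)
    (b : EuclideanSpace ℝ (Fin N)) (xstar : EuclideanSpace ℝ (Fin d))
    (hmin : ∀ y, (1 / 2) * ‖mulVecE A xstar - b‖ ^ 2 ≤ (1 / 2) * ‖mulVecE A y - b‖ ^ 2)
    (δ : ℝ) (hδ0 : 0 < δ) (hδ1 : δ ≤ 1)
    (ρ : ℝ) (hρ0 : 0 ≤ ρ) (hρ1 : ρ < 1)
    (wb : EuclideanSpace ℝ (Fin N))
    (x : ℕ → EuclideanSpace ℝ (Fin d)) (K : ℕ → Matrix (Fin d) (Fin d) ℝ)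
    (hrec : ∀ t, x (t + 1) =
      x t - δ • mulVecE (K (t + 1)) (mulVecE Aᵀ (mulVecE A (x t) - b - wb)))
    (hdecay : ∀ t, specNorm (K t - (Aᵀ * A)⁻¹) ≤ ρ ^ t * frobNorm (K 0 - (Aᵀ * A)⁻¹)) :
    ∀ t, ‖x (t + 1) - xstar‖ ≤
      (1 - δ + δ * lam1 * frobNorm (K 0 - (Aᵀ * A)⁻¹) * ρ ^ (t + 1)) * ‖x t - xstar‖
        + δ * Real.sqrt lam1 * frobNorm (K 0 - (Aᵀ * A)⁻¹) * ρ ^ (t + 1) * ‖wb‖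
        + δ * (1 / Real.sqrt lamd) * ‖wb‖ :=
  ipg_observation_noise_one_step_bound_general A hPD lam1 lamd hlam1 hlamd b xstar hmin δ hδ0 hδ1 ρ
    wb x K hrec hdecay
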